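/- The radarization map Rad_v acts as the identity on all vectors orthogonal to both the time axis and the direction of motion: if x₀ = 0 and x₁v_x + x₂v_y + x₃v_z = 0, then Rad_v(x) = x. -/

import Mathlib

noncomputable section
open Classical

/-- Euclidean norm of a velocity vector in `ℝ³`. -/
def nv (v : Fin 3 → ℝ) : ℝ := Real.sqrt ((v 0)^2 + (v 1)^2 + (v 2)^2)

/-- The rotation matrix used when `v_y ≠ 0` or `v_z ≠ 0`. -/
def rotMatrix (vx vy vz : ℝ) : Matrix (Fin 4) (Fin 4) ℝ :=
  (Real.sqrt (vx^2 + vy^2 + vz^2))⁻¹ •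
    ![![Real.sqrt (vx^2 + vy^2 + vz^2), 0, 0, 0],
      ![0, -vx, -vy, -vz],
      ![0, vy, -vx - vz^2 * (Real.sqrt (vx^2 + vy^2 + vz^2) - vx) / (vy^2 + vz^2),
        vy * vz * (Real.sqrt (vx^2 + vy^2 + vz^2) - vx) / (vy^2 + vz^2)],
      ![0, vz, vy * vz * (Real.sqrt (vx^2 + vy^2 + vz^2) - vx) / (vy^2 + vz^2),
        -vx - vy^2 * (Real.sqrt (vx^2 + vy^2 + vz^2) - vx) / (vy^2 + vz^2)]]

/-- The spatial rotation `R_v` taking direction `(1, v)` to `(1, -|v|, 0, 0)`. -/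
def Rv (v : Fin 3 → ℝ) : Matrix (Fin 4) (Fin 4) ℝ :=
  if v 1 ≠ 0 ∨ v 2 ≠ 0 then rotMatrix (v 0) (v 1) (v 2)
  else if 0 < v 0 then
    ![![1, 0, 0, 0], ![0, -1, 0, 0], ![0, 0, -1, 0], ![0, 0, 0, -1]]
  else 1

/-- The Galilean boost `G_w : (t,x,y,z) ↦ (t, x + wt, y, z)`. -/
def galBoost (w : ℝ) (x : Fin 4 → ℝ) : Fin 4 → ℝ :=
  ![x 0, x 1 + w * x 0, x 2, x 3]

/-- The Poincaré–Einstein synchronisation matrix `E_w`. -/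
def Emat (c w : ℝ) : Matrix (Fin 4) (Fin 4) ℝ :=
  ![![1 / (1 - w^2/c^2), (-w/c^2) / (1 - w^2/c^2), 0, 0],
    ![-w / (1 - w^2/c^2), 1 / (1 - w^2/c^2), 0, 0],
    ![0, 0, 1 / Real.sqrt (1 - w^2/c^2), 0],
    ![0, 0, 0, 1 / Real.sqrt (1 - w^2/c^2)]]

/-- The radarization map `Rad_v = R_v⁻¹ ∘ S_{|v|} ∘ E_{|v|} ∘ G_{|v|} ∘ R_v`. -/
def rad (c : ℝ) (v : Fin 3 → ℝ) (x : Fin 4 → ℝ) : Fin 4 → ℝ :=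
  (Rv v)⁻¹.mulVec (Real.sqrt (1 - (nv v)^2/c^2) •
    (Emat c (nv v)).mulVec (galBoost (nv v) ((Rv v).mulVec x)))

/-!
`R_v` is orthogonal, fixes the time coordinate and sends the velocity `(0, v)` to
`(0, -|v|, 0, 0)`. Hence, for `x` orthogonal to both `(1, 0, 0, 0)` and `(0, v)`, the vector
`y = R_v x` has `y₀ = 0` and `y₁ |v| = 0`. On such `y` the Galilean boost is trivial and
`E_{|v|}` only divides `y₂, y₃` by `√(1 - |v|²/c²)`, which `S_{|v|}` undoes; so
`Rad_v x = R_vᵀ R_v x = x`.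
-/

open Matrix

theorem dotProduct_mulVec_mulVec_of_transpose_mul_self {n α : Type*} [Fintype n]
    [DecidableEq n] [CommSemiring α] {R : Matrix n n α} (hR : Rᵀ * R = 1) (x y : n → α) :
    (R *ᵥ x) ⬝ᵥ (R *ᵥ y) = x ⬝ᵥ y := by
  rw [dotProduct_mulVec, ← mulVec_transpose, mulVec_mulVec, hR, one_mulVec]

theorem galBoost_of_apply_zero (w : ℝ) {y : Fin 4 → ℝ} (h0 : y 0 = 0) : galBoost w y = y := by
  ext i
  fin_cases i <;> simp [galBoost, h0]

theorem sqrt_smul_Emat_mulVec {c w : ℝ} (hw : w ^ 2 < c ^ 2) {y : Fin 4 → ℝ} (h0 : y 0 = 0)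
    (h1 : y 1 * w = 0) : Real.sqrt (1 - w ^ 2 / c ^ 2) • Emat c w *ᵥ y = y := by
  obtain h1 | rfl := mul_eq_zero.1 h1
  · have hpos : 0 < 1 - w ^ 2 / c ^ 2 := by
      rw [sub_pos, div_lt_one (lt_of_le_of_lt (sq_nonneg w) hw)]
      exact hw
    have hs : Real.sqrt (1 - w ^ 2 / c ^ 2) ≠ 0 := (Real.sqrt_pos.2 hpos).ne'
    ext i
    fin_cases i <;> simp [Emat, mulVec, dotProduct, Fin.sum_univ_four, h0, h1, hs]
  · ext i
    fin_cases i <;> simp [Emat, mulVec, dotProduct, Fin.sum_univ_four, h0]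

structure AlignsVelocity (v : Fin 3 → ℝ) (R : Matrix (Fin 4) (Fin 4) ℝ) : Prop where
  transpose_mul_self : Rᵀ * R = 1
  mulVec_apply_zero : ∀ x, (R *ᵥ x) 0 = x 0
  mulVec_velocity : R *ᵥ ![0, v 0, v 1, v 2] = ![0, -nv v, 0, 0]

namespace AlignsVelocity

variable {v : Fin 3 → ℝ} {R : Matrix (Fin 4) (Fin 4) ℝ}

theorem inv_eq_transpose (hR : AlignsVelocity v R) : R⁻¹ = Rᵀ :=
  inv_eq_left_inv hR.transpose_mul_self

theorem mulVec_apply_one_mul_nv_eq_zero (hR : AlignsVelocity v R) {x : Fin 4 → ℝ}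
    (horth : x 1 * v 0 + x 2 * v 1 + x 3 * v 2 = 0) : (R *ᵥ x) 1 * nv v = 0 := by
  have h := dotProduct_mulVec_mulVec_of_transpose_mul_self hR.transpose_mul_self x
    ![0, v 0, v 1, v 2]
  rw [hR.mulVec_velocity] at h
  simp [dotProduct, Fin.sum_univ_four] at h
  linarith

end AlignsVelocity

theorem rotMatrix_transpose_mul_self {vx vy vz : ℝ} (hd : 0 < vy ^ 2 + vz ^ 2) :
    (rotMatrix vx vy vz)ᵀ * rotMatrix vx vy vz = 1 := by
  have hP : 0 < vx ^ 2 + vy ^ 2 + vz ^ 2 := by linarith [sq_nonneg vx]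
  have hs : Real.sqrt (vx ^ 2 + vy ^ 2 + vz ^ 2) ^ 2 = vx ^ 2 + vy ^ 2 + vz ^ 2 :=
    Real.sq_sqrt hP.le
  have hs0 : Real.sqrt (vx ^ 2 + vy ^ 2 + vz ^ 2) ≠ 0 := (Real.sqrt_pos.2 hP).ne'
  ext i j
  rw [mul_apply, Fin.sum_univ_four]
  -- `rotMatrix` scales a plain `Fin 4 → Fin 4 → ℝ`, so `transpose_apply` must fire before unfolding
  simp only [transpose_apply]
  simp only [rotMatrix]
  generalize Real.sqrt (vx ^ 2 + vy ^ 2 + vz ^ 2) = s at hs hs0 ⊢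
  fin_cases i <;> fin_cases j <;> simp <;> field_simp <;> grind

theorem rotMatrix_alignsVelocity {v : Fin 3 → ℝ} (hd : 0 < v 1 ^ 2 + v 2 ^ 2) :
    AlignsVelocity v (rotMatrix (v 0) (v 1) (v 2)) := by
  have hP : 0 < v 0 ^ 2 + v 1 ^ 2 + v 2 ^ 2 := by linarith [sq_nonneg (v 0)]
  have hs : Real.sqrt (v 0 ^ 2 + v 1 ^ 2 + v 2 ^ 2) ^ 2 = v 0 ^ 2 + v 1 ^ 2 + v 2 ^ 2 :=
    Real.sq_sqrt hP.le
  have hs0 : Real.sqrt (v 0 ^ 2 + v 1 ^ 2 + v 2 ^ 2) ≠ 0 := (Real.sqrt_pos.2 hP).ne'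
  refine ⟨rotMatrix_transpose_mul_self hd, fun x => ?_, ?_⟩
  · simp [rotMatrix, mulVec, dotProduct, Fin.sum_univ_four, hs0]
  · ext i
    fin_cases i <;> simp [rotMatrix, nv, mulVec, dotProduct, Fin.sum_univ_four] <;>
      field_simp <;> grind

theorem Rv_of_pos {v : Fin 3 → ℝ} (h1 : v 1 = 0) (h2 : v 2 = 0) (h0 : 0 < v 0) :
    Rv v = diagonal ![1, -1, -1, -1] := by
  ext i j
  fin_cases i <;> fin_cases j <;> simp [Rv, h1, h2, h0]

theorem Rv_of_nonpos {v : Fin 3 → ℝ} (h1 : v 1 = 0) (h2 : v 2 = 0) (h0 : v 0 ≤ 0) :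
    Rv v = 1 := by
  simp [Rv, h1, h2, h0.not_gt]

theorem Rv_alignsVelocity (v : Fin 3 → ℝ) : AlignsVelocity v (Rv v) := by
  by_cases h : v 1 ≠ 0 ∨ v 2 ≠ 0
  · rw [Rv, if_pos h]
    exact rotMatrix_alignsVelocity (by rcases h with h | h <;> positivity)
  obtain ⟨h1, h2⟩ : v 1 = 0 ∧ v 2 = 0 := by simpa [not_or] using h
  have hnv : nv v = |v 0| := by simp [nv, h1, h2, Real.sqrt_sq_eq_abs]
  rcases lt_or_ge 0 (v 0) with h0 | h0
  · rw [Rv_of_pos h1 h2 h0]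
    refine ⟨?_, fun x => by simp [mulVec_diagonal], ?_⟩
    · ext i j
      fin_cases i <;> fin_cases j <;> simp
    · ext i
      fin_cases i <;> simp [mulVec_diagonal, h1, h2, hnv, abs_of_pos h0]
  · rw [Rv_of_nonpos h1 h2 h0]
    refine ⟨by simp, fun x => by simp, ?_⟩
    ext i
    fin_cases i <;> simp [h1, h2, hnv, abs_of_nonpos h0]

theorem rad_fixes_orthogonal_general (c : ℝ) (v : Fin 3 → ℝ) (hv : nv v < c)
    (x : Fin 4 → ℝ) (ht : x 0 = 0)
    (horth : x 1 * v 0 + x 2 * v 1 + x 3 * v 2 = 0) :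
    rad c v x = x := by
  have hR := Rv_alignsVelocity v
  have hy0 : (Rv v *ᵥ x) 0 = 0 := (hR.mulVec_apply_zero x).trans ht
  have hy1 := hR.mulVec_apply_one_mul_nv_eq_zero horth
  have hw : nv v ^ 2 < c ^ 2 := pow_lt_pow_left₀ hv (Real.sqrt_nonneg _) two_ne_zero
  rw [rad, galBoost_of_apply_zero _ hy0, sqrt_smul_Emat_mulVec hw hy0 hy1, hR.inv_eq_transpose,
    mulVec_mulVec, hR.transpose_mul_self, one_mulVec]

/-- `Rad_v` acts as the identity on vectors orthogonal to both the time axis and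
the direction of motion. -/
theorem rad_fixes_orthogonal (c : ℝ) (hc : 0 < c) (v : Fin 3 → ℝ) (hv : nv v < c)
    (x : Fin 4 → ℝ) (ht : x 0 = 0)
    (horth : x 1 * v 0 + x 2 * v 1 + x 3 * v 2 = 0) :
    rad c v x = x :=
  rad_fixes_orthogonal_general c v hv x ht horth
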